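/- arXiv:1210.0803 — 5 statements merged into one kernel-verified Lean document; each statement's English description precedes it below -/
import Mathlib

section
/- Let L = Σ_{i+j=0}^{d} a_{ij} Dx^i Dy^j be a nonzero operator of order d in K[Dx,Dy] that admits a Darboux transformation generated by M = Dx. Then there exists n ∈ K such that n·a_{0j} + ∂x(a_{0j}) = 0 for every j ∈ {0,…,d}; consequently, for all j, k ∈ {0,…,d} with a_{0j} ≠ 0 and a_{0k} ≠ 0 there exists G ∈ K with ∂x(G) = 0 and a_{0j} = G·a_{0k} (equivalently, ∂x(a_{0j}·a_{0k}^{-1}) = 0). -/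
/-- `d : K → K` is a derivation: additive and satisfying the Leibniz rule. -/
def IsDeriv {K : Type*} [Field K] (d : K → K) : Prop :=
  (∀ a b : K, d (a + b) = d a + d b) ∧ (∀ a b : K, d (a * b) = d a * b + a * d b)

/-- A formal linear partial differential operator in `K[Dx,Dy]`:
the finitely supported family of its coefficients, where the value at
`(i, j)` is the coefficient of `Dx^i Dy^j`.  Two operators are equal iff
all their coefficients coincide. -/
abbrev LPDO (K : Type*) [Field K] : Type _ := (ℕ × ℕ) →₀ K

namespace LPDO

variable {K : Type*} [Field K]

/-- The operator `Dx`. -/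
noncomputable def Dx : LPDO K := Finsupp.single (1, 0) 1

/-- The operator `Dy`. -/
noncomputable def Dy : LPDO K := Finsupp.single (0, 1) 1

/-- The operator of multiplication by `m ∈ K`. -/
noncomputable def ofK (m : K) : LPDO K := Finsupp.single (0, 0) m

/-- Composition `A ∘ B` in `K[Dx,Dy]`, computed from the relations
`Dx ∘ b = b Dx + dx(b)`, `Dy ∘ b = b Dy + dy(b)`, `Dx ∘ Dy = Dy ∘ Dx`, via
`a Dx^i Dy^j ∘ b Dx^k Dy^l
  = Σ_{p≤i} Σ_{q≤j} a C(i,p) C(j,q) dx^{i-p}(dy^{j-q}(b)) Dx^{p+k} Dy^{q+l}`. -/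
noncomputable def comp (dx dy : K → K) (A B : LPDO K) : LPDO K :=
  A.sum fun ij a =>
    B.sum fun kl b =>
      ∑ p ∈ Finset.range (ij.1 + 1), ∑ q ∈ Finset.range (ij.2 + 1),
        Finsupp.single (p + kl.1, q + kl.2)
          (a * (ij.1.choose p : K) * (ij.2.choose q : K) * dx^[ij.1 - p] (dy^[ij.2 - q] b))

/-- The order of a (nonzero) operator: the largest `i + j` with `a_{ij} ≠ 0`. -/
def ord (A : LPDO K) : ℕ := A.support.sup fun ij => ij.1 + ij.2

/-- The degree-`d` part of the symbol: `Σ_{i+j=d} a_{ij} X^i Y^j ∈ K[X,Y]`,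
where `X`, `Y` are the two variables of `MvPolynomial (Fin 2) K`. -/
noncomputable def psym (A : LPDO K) (d : ℕ) : MvPolynomial (Fin 2) K :=
  ∑ i ∈ Finset.range (d + 1),
    MvPolynomial.monomial
      (Finsupp.single (0 : Fin 2) i + Finsupp.single (1 : Fin 2) (d - i)) (A (i, d - i))

/-- `L1` has the same principal symbol as `L`. -/
def SameSym (L1 L : LPDO K) : Prop :=
  ord L1 = ord L ∧ psym L1 (ord L) = psym L (ord L)

/-- `L` admits a Darboux transformation generated by `M`: there are `N`, `L1`,
with `L1` having the same principal symbol as `L`, such that `N ∘ L = L1 ∘ M`. -/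
def AdmitsDarboux (dx dy : K → K) (L M : LPDO K) : Prop :=
  ∃ N L1 : LPDO K, SameSym L1 L ∧ comp dx dy N L = comp dx dy L1 M

/-- The gauge transform `R^g = g⁻¹ ∘ R ∘ g`. -/
noncomputable def gauge (dx dy : K → K) (g : K) (R : LPDO K) : LPDO K :=
  comp dx dy (ofK g⁻¹) (comp dx dy R (ofK g))

/-- The action `L(f) = Σ a_{ij} ∂x^i ∂y^j (f)` of an operator on `K`. -/
noncomputable def apply (dx dy : K → K) (A : LPDO K) (f : K) : K :=
  A.sum fun ij a => a * dx^[ij.1] (dy^[ij.2] f)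

end LPDO

section Aux

variable {K : Type*} [Field K]

/-- Top slice polynomial: `Σ_{i ≤ e} A(i, e-i) X^i`. -/
noncomputable def topPoly (A : LPDO K) (e : ℕ) : Polynomial K :=
  ∑ i ∈ Finset.range (e + 1), Polynomial.C (A (i, e - i)) * Polynomial.X ^ i

lemma topPoly_coeff (A : LPDO K) (e i : ℕ) (hi : i ≤ e) :
    (topPoly A e).coeff i = A (i, e - i) := by
  unfold topPoly
  simp only [Polynomial.finset_sum_coeff, Polynomial.coeff_C_mul, Polynomial.coeff_X_pow,
    mul_ite, mul_one, mul_zero]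
  rw [Finset.sum_ite_eq]
  simp [Nat.lt_succ_iff, hi]

lemma topPoly_coeff_gt (A : LPDO K) (e i : ℕ) (hi : e < i) :
    (topPoly A e).coeff i = 0 := by
  unfold topPoly
  simp only [Polynomial.finset_sum_coeff, Polynomial.coeff_C_mul, Polynomial.coeff_X_pow,
    mul_ite, mul_one, mul_zero]
  apply Finset.sum_eq_zero
  intro i' hi'
  simp only [Finset.mem_range] at hi'
  rw [if_neg (by omega)]

lemma topPoly_coeff' (A : LPDO K) (e : ℕ)
    (hA : ∀ ij : ℕ × ℕ, A ij ≠ 0 → ij.1 + ij.2 ≤ e) (i : ℕ) :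
    (topPoly A e).coeff i = A (i, e - i) := by
  rcases le_or_gt i e with h | h
  · exact topPoly_coeff A e i h
  · rw [topPoly_coeff_gt A e i h]
    by_contra hne
    have h2 : i + (e - i) ≤ e := hA (i, e - i) (fun hc => hne hc.symm)
    omega

lemma coeff_comp (dx dy : K → K) (A B : LPDO K) (x : ℕ × ℕ) :
    LPDO.comp dx dy A B x =
      ∑ ij ∈ A.support, ∑ kl ∈ B.support,
        ∑ p ∈ Finset.range (ij.1 + 1), ∑ q ∈ Finset.range (ij.2 + 1),
          (if (p + kl.1, q + kl.2) = x then
            A ij * (ij.1.choose p : K) * (ij.2.choose q : K) *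
              dx^[ij.1 - p] (dy^[ij.2 - q] (B kl)) else 0) := by
  unfold LPDO.comp
  simp only [Finsupp.sum_apply, Finsupp.finset_sum_apply, Finsupp.single_apply]
  rfl

lemma comp_coeff_high (dx dy : K → K) (A B : LPDO K) (eA eB : ℕ)
    (hA : ∀ ij : ℕ × ℕ, A ij ≠ 0 → ij.1 + ij.2 ≤ eA)
    (hB : ∀ ij : ℕ × ℕ, B ij ≠ 0 → ij.1 + ij.2 ≤ eB)
    (x : ℕ × ℕ) (hx : eA + eB < x.1 + x.2) :
    LPDO.comp dx dy A B x = 0 := by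
  obtain ⟨x1, x2⟩ := x
  rw [coeff_comp]
  refine Finset.sum_eq_zero fun ij hij => Finset.sum_eq_zero fun kl hkl =>
    Finset.sum_eq_zero fun p hp => Finset.sum_eq_zero fun q hq => ?_
  have h1 := hA ij (Finsupp.mem_support_iff.mp hij)
  have h2 := hB kl (Finsupp.mem_support_iff.mp hkl)
  simp only [Finset.mem_range] at hp hq
  dsimp only at hx
  rw [if_neg]
  intro hc
  simp only [Prod.mk.injEq] at hc
  omega

lemma comp_coeff_top (dx dy : K → K) (A B : LPDO K) (eA eB : ℕ)
    (hA : ∀ ij : ℕ × ℕ, A ij ≠ 0 → ij.1 + ij.2 ≤ eA)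
    (hB : ∀ ij : ℕ × ℕ, B ij ≠ 0 → ij.1 + ij.2 ≤ eB)
    (m n : ℕ) (hmn : m + n = eA + eB) :
    LPDO.comp dx dy A B (m, n) =
      ∑ x ∈ Finset.HasAntidiagonal.antidiagonal m, A (x.1, eA - x.1) * B (x.2, eB - x.2) := by
  classical
  rw [coeff_comp]
  have step1 : ∀ ij ∈ A.support, ∀ kl ∈ B.support,
      (∑ p ∈ Finset.range (ij.1 + 1), ∑ q ∈ Finset.range (ij.2 + 1),
        if (p + kl.1, q + kl.2) = ((m : ℕ), (n : ℕ)) then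
          A ij * (ij.1.choose p : K) * (ij.2.choose q : K) *
            dx^[ij.1 - p] (dy^[ij.2 - q] (B kl)) else 0)
      = if ij.1 + kl.1 = m ∧ ij.2 + kl.2 = n ∧ ij.1 + ij.2 = eA ∧ kl.1 + kl.2 = eB
        then A ij * B kl else 0 := by
    intro ij hij kl hkl
    have h1 := hA ij (Finsupp.mem_support_iff.mp hij)
    have h2 := hB kl (Finsupp.mem_support_iff.mp hkl)
    by_cases h : ij.1 + kl.1 = m ∧ ij.2 + kl.2 = n ∧ ij.1 + ij.2 = eA ∧ kl.1 + kl.2 = eB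
    · rw [if_pos h]
      refine (Finset.sum_eq_single_of_mem ij.1 (Finset.self_mem_range_succ _)
        (fun p hp hne => Finset.sum_eq_zero fun q hq => ?_)).trans ?_
      · rw [if_neg]
        intro hc
        simp only [Prod.mk.injEq] at hc
        exact hne (by omega)
      · refine (Finset.sum_eq_single_of_mem ij.2 (Finset.self_mem_range_succ _)
          (fun q hq hne => ?_)).trans ?_
        · rw [if_neg]
          intro hc
          simp only [Prod.mk.injEq] at hc
          exact hne (by omega)
        · rw [if_pos (by rw [h.1, h.2.1])]
          simp
    · rw [if_neg h]
      refine Finset.sum_eq_zero fun p hp => Finset.sum_eq_zero fun q hq => ?_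
      rw [if_neg]
      intro hc
      simp only [Prod.mk.injEq] at hc
      simp only [Finset.mem_range] at hp hq
      exact h (by omega)
  rw [Finset.sum_congr rfl (fun ij hij => Finset.sum_congr rfl (step1 ij hij))]
  rw [← Finset.sum_product']
  refine Finset.sum_bij_ne_zero (fun y _ _ => (y.1.1, y.2.1)) ?_ ?_ ?_ ?_
  · intro y h1 h2
    rw [Finset.HasAntidiagonal.mem_antidiagonal]
    by_contra hne
    exact h2 (if_neg (fun hc => hne hc.1))
  · rintro ⟨⟨a1, b1⟩, ⟨c1, d1⟩⟩ h11 h12 ⟨⟨a2, b2⟩, ⟨c2, d2⟩⟩ h21 h22 himg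
    have hc1 : a1 + c1 = m ∧ b1 + d1 = n ∧ a1 + b1 = eA ∧ c1 + d1 = eB := by
      by_contra hc; exact h12 (if_neg hc)
    have hc2 : a2 + c2 = m ∧ b2 + d2 = n ∧ a2 + b2 = eA ∧ c2 + d2 = eB := by
      by_contra hc; exact h22 (if_neg hc)
    simp only [Prod.mk.injEq] at himg ⊢
    omega
  · intro x hx hgx
    rw [Finset.HasAntidiagonal.mem_antidiagonal] at hx
    have hA' : A (x.1, eA - x.1) ≠ 0 := left_ne_zero_of_mul hgx
    have hB' : B (x.2, eB - x.2) ≠ 0 := right_ne_zero_of_mul hgx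
    have hx1 : x.1 + (eA - x.1) ≤ eA := hA (x.1, eA - x.1) hA'
    have hx2 : x.2 + (eB - x.2) ≤ eB := hB (x.2, eB - x.2) hB'
    refine ⟨((x.1, eA - x.1), (x.2, eB - x.2)),
      Finset.mem_product.mpr ⟨Finsupp.mem_support_iff.mpr hA',
        Finsupp.mem_support_iff.mpr hB'⟩, ?_, rfl⟩
    rw [if_pos (show x.1 + x.2 = m ∧ (eA - x.1) + (eB - x.2) = n ∧
        x.1 + (eA - x.1) = eA ∧ x.2 + (eB - x.2) = eB from
      ⟨hx, by omega, by omega, by omega⟩)]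
    exact mul_ne_zero hA' hB'
  · rintro ⟨⟨a1, b1⟩, ⟨c1, d1⟩⟩ h1 h2
    have hc : a1 + c1 = m ∧ b1 + d1 = n ∧ a1 + b1 = eA ∧ c1 + d1 = eB := by
      by_contra hc; exact h2 (if_neg hc)
    rw [if_pos hc]
    dsimp only
    have e1 : b1 = eA - a1 := by omega
    have e2 : d1 = eB - c1 := by omega
    rw [← e1, ← e2]

lemma topPoly_comp (dx dy : K → K) (A B : LPDO K) (eA eB : ℕ)
    (hA : ∀ ij : ℕ × ℕ, A ij ≠ 0 → ij.1 + ij.2 ≤ eA)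
    (hB : ∀ ij : ℕ × ℕ, B ij ≠ 0 → ij.1 + ij.2 ≤ eB) :
    topPoly (LPDO.comp dx dy A B) (eA + eB) = topPoly A eA * topPoly B eB := by
  apply Polynomial.ext
  intro m
  rw [Polynomial.coeff_mul]
  rcases le_or_gt m (eA + eB) with h | h
  · rw [topPoly_coeff _ _ _ h,
      comp_coeff_top dx dy A B eA eB hA hB m (eA + eB - m) (by omega)]
    exact Finset.sum_congr rfl fun x hx => by
      rw [topPoly_coeff' A eA hA, topPoly_coeff' B eB hB]
  · rw [topPoly_coeff_gt _ _ _ h]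
    symm
    apply Finset.sum_eq_zero
    intro x hx
    rw [Finset.HasAntidiagonal.mem_antidiagonal] at hx
    rcases le_or_gt x.1 eA with h1 | h1
    · rw [topPoly_coeff_gt B eB x.2 (by omega), mul_zero]
    · rw [topPoly_coeff_gt A eA x.1 h1, zero_mul]

lemma ord_bound (A : LPDO K) : ∀ ij : ℕ × ℕ, A ij ≠ 0 → ij.1 + ij.2 ≤ LPDO.ord A :=
  fun ij h =>
    (Finset.le_sup (f := fun ij : ℕ × ℕ => ij.1 + ij.2)
      (Finsupp.mem_support_iff.mpr h) : _)

lemma topPoly_ord_ne_zero (A : LPDO K) (hA : A ≠ 0) :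
    topPoly A (LPDO.ord A) ≠ 0 := by
  obtain ⟨⟨i, j⟩, hij, hsup⟩ := Finset.exists_mem_eq_sup A.support
    (Finsupp.support_nonempty_iff.mpr hA) (fun ij => ij.1 + ij.2)
  have hord : LPDO.ord A = i + j := hsup
  intro h
  have hne : A (i, j) ≠ 0 := Finsupp.mem_support_iff.mp hij
  apply hne
  have hij1 : i ≤ LPDO.ord A := by rw [hord]; exact Nat.le_add_right _ _
  have hcf := topPoly_coeff A (LPDO.ord A) i hij1
  rw [h, Polynomial.coeff_zero] at hcf
  have hpair : ((i : ℕ), LPDO.ord A - i) = ((i : ℕ), (j : ℕ)) := by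
    simp only [Prod.mk.injEq, true_and]
    omega
  rw [← hpair]
  exact hcf.symm

lemma exists_of_topPoly_ne (A : LPDO K) (e : ℕ) (h : topPoly A e ≠ 0) :
    ∃ x : ℕ × ℕ, x.1 + x.2 = e ∧ A x ≠ 0 := by
  have hex : ∃ i, (topPoly A e).coeff i ≠ 0 := by
    by_contra hall
    push_neg at hall
    exact h (Polynomial.ext fun i' => (hall i').trans rfl)
  obtain ⟨i, hi⟩ := hex
  rcases le_or_gt i e with hle | hlt
  · exact ⟨(i, e - i), by dsimp only; omega, by rwa [topPoly_coeff _ _ _ hle] at hi⟩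
  · exact absurd (topPoly_coeff_gt A e i hlt) hi

lemma Dx_bound : ∀ ij : ℕ × ℕ, (LPDO.Dx : LPDO K) ij ≠ 0 → ij.1 + ij.2 ≤ 1 := by
  intro ij h
  unfold LPDO.Dx at h
  rw [Finsupp.single_apply] at h
  by_cases hc : ((1, 0) : ℕ × ℕ) = ij
  · rw [← hc]
    exact Nat.le_refl 1
  · rw [if_neg hc] at h
    exact absurd rfl h

lemma topPoly_Dx : topPoly (LPDO.Dx : LPDO K) 1 = Polynomial.X := by
  unfold topPoly LPDO.Dx
  rw [Finset.sum_range_succ, Finset.sum_range_one]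
  simp [Finsupp.single_apply, Prod.mk.injEq]

lemma psym_coeff (A : LPDO K) (d i : ℕ) (hi : i ≤ d) :
    MvPolynomial.coeff (Finsupp.single (0 : Fin 2) i + Finsupp.single (1 : Fin 2) (d - i))
      (LPDO.psym A d) = A (i, d - i) := by
  unfold LPDO.psym
  rw [MvPolynomial.coeff_sum]
  rw [Finset.sum_eq_single_of_mem i (Finset.mem_range.mpr (by omega))]
  · rw [MvPolynomial.coeff_monomial, if_pos rfl]
  · intro i' hi' hne
    rw [MvPolynomial.coeff_monomial, if_neg]
    intro hc
    apply hne
    have hc0 := congrArg (fun f : Fin 2 →₀ ℕ => f 0) hc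
    simpa [Finsupp.single_apply] using hc0

lemma comp_zero_left (dx dy : K → K) (B : LPDO K) :
    LPDO.comp dx dy (0 : LPDO K) B = 0 := by
  unfold LPDO.comp
  exact Finsupp.sum_zero_index

lemma topPoly_zero (e : ℕ) : topPoly (0 : LPDO K) e = 0 := by
  unfold topPoly
  simp

lemma comp_Dx_coeff0 (dx dy : K → K) (A : LPDO K) (j : ℕ) :
    LPDO.comp dx dy A LPDO.Dx (0, j) = 0 := by
  rw [coeff_comp]
  refine Finset.sum_eq_zero fun ij hij => Finset.sum_eq_zero fun kl hkl =>
    Finset.sum_eq_zero fun p hp => Finset.sum_eq_zero fun q hq => ?_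
  have hkl1 : kl = ((1 : ℕ), (0 : ℕ)) := by
    unfold LPDO.Dx at hkl
    simpa using Finsupp.support_single_subset hkl
  subst hkl1
  rw [if_neg]
  intro hc
  simp only [Prod.mk.injEq] at hc
  omega

lemma comp_coeff0 (dx dy : K → K) (hdx0 : dx 0 = 0) (A B : LPDO K)
    (hA : ∀ ij : ℕ × ℕ, A ij ≠ 0 → ij = (0, 0) ∨ ij = (1, 0)) (j : ℕ) :
    LPDO.comp dx dy A B (0, j) = A (0, 0) * B (0, j) + A (1, 0) * dx (B (0, j)) := by
  classical
  rw [coeff_comp]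
  rw [Finset.sum_subset
    (show A.support ⊆ {((0 : ℕ), (0 : ℕ)), ((1 : ℕ), (0 : ℕ))} by
      intro ij h
      rcases hA ij (Finsupp.mem_support_iff.mp h) with h' | h' <;> simp [h'])
    (fun ij _ hij => by
      have hz : A ij = 0 := Finsupp.notMem_support_iff.mp hij
      refine Finset.sum_eq_zero fun kl hkl => Finset.sum_eq_zero fun p hp =>
        Finset.sum_eq_zero fun q hq => ?_
      rw [hz]
      simp)]
  rw [show ({((0 : ℕ), (0 : ℕ)), ((1 : ℕ), (0 : ℕ))} : Finset (ℕ × ℕ))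
      = insert ((0 : ℕ), (0 : ℕ)) {((1 : ℕ), (0 : ℕ))} from rfl]
  rw [Finset.sum_insert (by decide), Finset.sum_singleton]
  congr 1
  · -- (0,0) term
    trans (∑ kl ∈ B.support, if kl = ((0 : ℕ), j) then A (0, 0) * B kl else 0)
    · refine Finset.sum_congr rfl fun kl hkl => ?_
      by_cases h0 : kl = ((0 : ℕ), j)
      · subst h0
        rw [if_pos rfl]
        simp
      · rw [if_neg h0]
        refine Finset.sum_eq_zero fun p hp => Finset.sum_eq_zero fun q hq => ?_
        rw [if_neg]
        intro hc
        simp only [Prod.mk.injEq] at hc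
        simp only [Finset.mem_range] at hp hq
        apply h0
        obtain ⟨k1, k2⟩ := kl
        simp only [Prod.mk.injEq]
        dsimp only at hc hp hq
        omega
    · rw [Finset.sum_ite_eq']
      split_ifs with h
      · rfl
      · rw [Finsupp.notMem_support_iff.mp h, mul_zero]
  · -- (1,0) term
    trans (∑ kl ∈ B.support, if kl = ((0 : ℕ), j) then A (1, 0) * dx (B kl) else 0)
    · refine Finset.sum_congr rfl fun kl hkl => ?_
      by_cases h0 : kl = ((0 : ℕ), j)
      · subst h0
        rw [if_pos rfl]
        rw [Finset.sum_range_succ]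
        simp
      · rw [if_neg h0]
        refine Finset.sum_eq_zero fun p hp => Finset.sum_eq_zero fun q hq => ?_
        rw [if_neg]
        intro hc
        simp only [Prod.mk.injEq] at hc
        simp only [Finset.mem_range] at hp hq
        apply h0
        obtain ⟨k1, k2⟩ := kl
        simp only [Prod.mk.injEq]
        dsimp only at hc hp hq
        omega
    · rw [Finset.sum_ite_eq']
      split_ifs with h
      · rfl
      · rw [Finsupp.notMem_support_iff.mp h, hdx0, mul_zero]

end Aux

/-- if `L` of order `d` admits a Darboux transformation generated
by `Dx`, then there is `n ∈ K` with `n·a₀ⱼ + ∂x(a₀ⱼ) = 0` for all `j ≤ d`;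
consequently, for all nonzero `a₀ⱼ`, `a₀ₖ` there is a `∂x`-constant `G` with
`a₀ⱼ = G·a₀ₖ`, equivalently `∂x(a₀ⱼ·a₀ₖ⁻¹) = 0`. -/


theorem statement6 {K : Type*} [Field K] [CharZero K]
    (dx dy : K → K) (hdx : IsDeriv dx) (hdy : IsDeriv dy)
    (hcomm : ∀ a : K, dx (dy a) = dy (dx a))
    (L : LPDO K) (hLne : L ≠ 0) (d : ℕ) (hd : LPDO.ord L = d)
    (hD : LPDO.AdmitsDarboux dx dy L LPDO.Dx) :
    (∃ n : K, ∀ j ≤ d, n * L (0, j) + dx (L (0, j)) = 0) ∧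
    ∀ j k : ℕ, j ≤ d → k ≤ d → L (0, j) ≠ 0 → L (0, k) ≠ 0 →
      (∃ G : K, dx G = 0 ∧ L (0, j) = G * L (0, k)) ∧
      dx (L (0, j) * (L (0, k))⁻¹) = 0 := by
  obtain ⟨N, L1, ⟨hordL1, hpsym⟩, hEq⟩ := hD
  rw [hd] at hordL1 hpsym
  have hdx0 : dx 0 = 0 := by
    have h := hdx.1 0 0
    rw [add_zero] at h
    exact (left_eq_add.mp h)
  have hdx1 : dx 1 = 0 := by
    have h := hdx.2 1 1
    simp only [one_mul, mul_one] at h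
    exact (left_eq_add.mp h)
  -- bounds
  have hLb : ∀ ij : ℕ × ℕ, L ij ≠ 0 → ij.1 + ij.2 ≤ d := by
    intro ij h; have := ord_bound L ij h; omega
  have hL1b : ∀ ij : ℕ × ℕ, L1 ij ≠ 0 → ij.1 + ij.2 ≤ d := by
    intro ij h; have := ord_bound L1 ij h; omega
  -- top polynomial of L
  have hTopLne : topPoly L d ≠ 0 := by
    have := topPoly_ord_ne_zero L hLne
    rwa [hd] at this
  -- topPoly L1 d = topPoly L d
  have htopL1 : topPoly L1 d = topPoly L d := by
    apply Polynomial.ext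
    intro i
    rcases le_or_gt i d with hi | hi
    · rw [topPoly_coeff _ _ _ hi, topPoly_coeff _ _ _ hi,
        ← psym_coeff L1 d i hi, ← psym_coeff L d i hi, hpsym]
    · rw [topPoly_coeff_gt _ _ _ hi, topPoly_coeff_gt _ _ _ hi]
  -- RHS top identity
  have hQ : topPoly (LPDO.comp dx dy L1 LPDO.Dx) (d + 1) = topPoly L d * Polynomial.X := by
    rw [topPoly_comp dx dy L1 LPDO.Dx d 1 hL1b Dx_bound, htopL1, topPoly_Dx]
  have hQne : topPoly (LPDO.comp dx dy L1 LPDO.Dx) (d + 1) ≠ 0 := by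
    rw [hQ]
    exact mul_ne_zero hTopLne Polynomial.X_ne_zero
  -- N ≠ 0
  have hNne : N ≠ 0 := by
    intro h
    rw [h, comp_zero_left] at hEq
    rw [← hEq, topPoly_zero] at hQne
    exact hQne rfl
  have hNb := ord_bound N
  have hTopNne : topPoly N (LPDO.ord N) ≠ 0 := topPoly_ord_ne_zero N hNne
  have hP : topPoly (LPDO.comp dx dy N L) (LPDO.ord N + d)
      = topPoly N (LPDO.ord N) * topPoly L d := topPoly_comp dx dy N L _ d hNb hLb
  -- ord N = 1
  have heN : LPDO.ord N = 1 := by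
    have hle : LPDO.ord N ≤ 1 := by
      have hne : topPoly (LPDO.comp dx dy N L) (LPDO.ord N + d) ≠ 0 := by
        rw [hP]; exact mul_ne_zero hTopNne hTopLne
      obtain ⟨x, hx, hxne⟩ := exists_of_topPoly_ne _ _ hne
      rw [hEq] at hxne
      by_contra hgt
      exact hxne (comp_coeff_high dx dy L1 LPDO.Dx d 1 hL1b Dx_bound x (by omega))
    have hge : 1 ≤ LPDO.ord N := by
      obtain ⟨x, hx, hxne⟩ := exists_of_topPoly_ne _ _ hQne
      rw [← hEq] at hxne
      by_contra hlt
      exact hxne (comp_coeff_high dx dy N L (LPDO.ord N) d hNb hLb x (by omega))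
    omega
  -- topPoly N 1 = X
  have hTopN : topPoly N 1 = Polynomial.X := by
    apply mul_right_cancel₀ hTopLne
    have h1 : topPoly N 1 * topPoly L d = topPoly (LPDO.comp dx dy N L) (1 + d) := by
      rw [← heN] at *
      exact hP.symm
    rw [h1, hEq, show 1 + d = d + 1 from by omega, hQ, mul_comm]
  have hN01 : N (0, 1) = 0 := by
    have h := topPoly_coeff N 1 0 (by omega)
    rw [hTopN, Polynomial.coeff_X_zero] at h
    exact h.symm
  have hN10 : N (1, 0) = 1 := by
    have h := topPoly_coeff N 1 1 (le_refl 1)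
    rw [hTopN, Polynomial.coeff_X_one] at h
    exact h.symm
  have hNsupp : ∀ ij : ℕ × ℕ, N ij ≠ 0 → ij = (0, 0) ∨ ij = (1, 0) := by
    intro ij h
    have hb : ij.1 + ij.2 ≤ 1 := by
      have := hNb ij h; omega
    obtain ⟨i, jj⟩ := ij
    dsimp only at hb
    have hcase : (i = 0 ∧ jj = 0) ∨ (i = 1 ∧ jj = 0) ∨ (i = 0 ∧ jj = 1) := by omega
    rcases hcase with ⟨h1, h2⟩ | ⟨h1, h2⟩ | ⟨h1, h2⟩
    · left; rw [h1, h2]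
    · right; rw [h1, h2]
    · exfalso; subst h1; subst h2; exact h hN01
  -- the key identity
  have key : ∀ j : ℕ, N (0, 0) * L (0, j) + dx (L (0, j)) = 0 := by
    intro j
    have h1 := comp_coeff0 dx dy hdx0 N L hNsupp j
    rw [hEq, comp_Dx_coeff0, hN10, one_mul] at h1
    exact h1.symm
  refine ⟨⟨N (0, 0), fun j _ => key j⟩, ?_⟩
  intro j k hj hk hje hke
  have hda : dx (L (0, j)) = -(N (0, 0) * L (0, j)) :=
    eq_neg_of_add_eq_zero_right (key j)
  have hdb : dx (L (0, k)) = -(N (0, 0) * L (0, k)) :=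
    eq_neg_of_add_eq_zero_right (key k)
  have hbb : L (0, k) * (L (0, k))⁻¹ = 1 := mul_inv_cancel₀ hke
  have hE2 : (0 : K) = dx (L (0, k)) * (L (0, k))⁻¹ + L (0, k) * dx ((L (0, k))⁻¹) := by
    rw [← hdx.2 (L (0, k)) ((L (0, k))⁻¹), hbb, hdx1]
  have h2 : L (0, k) * dx ((L (0, k))⁻¹) = N (0, 0) * (L (0, k) * (L (0, k))⁻¹) := by
    rw [hdb] at hE2
    linear_combination -hE2
  rw [hbb, mul_one] at h2
  have hbinv : dx ((L (0, k))⁻¹) = N (0, 0) * (L (0, k))⁻¹ := by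
    have h3 : (L (0, k))⁻¹ * (L (0, k) * dx ((L (0, k))⁻¹)) = (L (0, k))⁻¹ * N (0, 0) := by
      rw [h2]
    rw [← mul_assoc, inv_mul_cancel₀ hke, one_mul] at h3
    rw [h3, mul_comm]
  have hG : dx (L (0, j) * (L (0, k))⁻¹) = 0 := by
    rw [hdx.2, hda, hbinv]
    ring
  refine ⟨⟨L (0, j) * (L (0, k))⁻¹, hG, ?_⟩, hG⟩
  field_simp
end

section
/- Let L = Σ_{i+j=0}^{d} a_{ij} Dx^i Dy^j be a nonzero operator of order d in K[Dx,Dy], and suppose that for all j, k ∈ {0,…,d} with a_{0j} ≠ 0 and a_{0k} ≠ 0 one has ∂x(a_{0j}·a_{0k}^{-1}) = 0 (i.e., a_{0j} = G·a_{0k} for some G ∈ K with ∂x(G) = 0). Then there exist n ∈ K and an operator L1 ∈ K[Dx,Dy] with Sym_{L1} = Sym_L such that (Dx + n)∘L = L1∘Dx; in particular, L admits a Darboux transformation generated by M = Dx. -/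
section helpers
variable {K : Type*} [Field K] {dx dy : K → K}

lemma IsDeriv_deriv_zero (h : IsDeriv dx) : dx 0 = 0 := by
  have := h.1 0 0
  simp only [add_zero] at this
  exact (left_eq_add.mp this)

lemma IsDeriv_deriv_one (h : IsDeriv dx) : dx 1 = 0 := by
  have := h.2 1 1
  simp only [mul_one, one_mul] at this
  exact (left_eq_add.mp this)

lemma iter_deriv_zero (h : IsDeriv dx) (m : ℕ) : dx^[m] 0 = 0 :=
  Function.iterate_fixed (IsDeriv_deriv_zero h) m

lemma iter_deriv_one (h : IsDeriv dx) {m : ℕ} (hm : m ≠ 0) : dx^[m] 1 = 0 := by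
  obtain ⟨m', rfl⟩ := Nat.exists_eq_succ_of_ne_zero hm
  rw [Function.iterate_succ_apply, IsDeriv_deriv_one h, iter_deriv_zero h]

namespace LPDO

lemma comp_add_left (dx dy : K → K) (A B C : LPDO K) :
    comp dx dy (A + B) C = comp dx dy A C + comp dx dy B C := by
  unfold comp
  apply Finsupp.sum_add_index'
  · intro ij; simp
  · intro ij a b
    simp only [Finsupp.sum, add_mul, Finsupp.single_add, Finset.sum_add_distrib]

end LPDO
end helpers

section helpers2
variable {K : Type*} [Field K] {dx dy : K → K}
namespace LPDO

lemma sum_single_apply (B : (ℕ×ℕ) →₀ K) (g : K → K) (hg : g 0 = 0) (m : ℕ × ℕ) :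
    (B.sum fun kl b => Finsupp.single kl (g b)) m = g (B m) := by
  rw [Finsupp.sum_apply, Finsupp.sum]
  simp only [Finsupp.single_apply]
  rw [Finset.sum_ite_eq' B.support m (fun kl => g (B kl))]
  split
  · rfl
  · next h => rw [Finsupp.notMem_support_iff.mp h, hg]

def shift : ℕ × ℕ → ℕ × ℕ := fun kl => (1 + kl.1, kl.2)

lemma shift_inj : Function.Injective (shift) := by
  intro a b h
  simp only [shift, Prod.mk.injEq] at h
  exact Prod.ext (by omega) h.2

lemma mapDomain_shift_zero (B : (ℕ×ℕ) →₀ K) (j : ℕ) :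
    Finsupp.mapDomain shift B (0, j) = 0 := by
  apply Finsupp.mapDomain_notin_range
  rintro ⟨kl, h⟩
  simp [shift, Prod.ext_iff] at h

lemma mapDomain_shift_succ (B : (ℕ×ℕ) →₀ K) (i j : ℕ) :
    Finsupp.mapDomain shift B (i + 1, j) = B (i, j) := by
  have : (i + 1, j) = shift (i, j) := by simp [shift, Nat.add_comm]
  rw [this, Finsupp.mapDomain_apply shift_inj]

lemma comp_Dx_left (hdy : IsDeriv dy) (B : LPDO K) :
    comp dx dy Dx B
      = (B.sum fun kl b => Finsupp.single kl (dx b)) + Finsupp.mapDomain shift B := by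
  unfold comp Dx
  rw [Finsupp.sum_single_index (by simp)]
  rw [Finsupp.mapDomain]
  rw [← Finsupp.sum_add]
  apply Finsupp.sum_congr
  intro kl _
  simp [Finset.sum_range_succ, shift, -Finsupp.single_mul]

lemma comp_ofK_left (hdx : IsDeriv dx) (hdy : IsDeriv dy) (n : K) (B : LPDO K) :
    comp dx dy (ofK n) B = B.sum fun kl b => Finsupp.single kl (n * b) := by
  unfold comp ofK
  rw [Finsupp.sum_single_index (by simp)]
  apply Finsupp.sum_congr
  intro kl _
  simp [-Finsupp.single_mul]

lemma comp_Dx_right (hdx : IsDeriv dx) (hdy : IsDeriv dy) (R : LPDO K) :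
    comp dx dy R Dx = Finsupp.mapDomain shift R := by
  unfold comp Dx
  rw [Finsupp.mapDomain]
  apply Finsupp.sum_congr
  intro ij _
  rw [Finsupp.sum_single_index (by simp [iter_deriv_zero hdy, iter_deriv_zero hdx])]
  rw [Finset.sum_eq_single ij.1]
  · rw [Finset.sum_eq_single ij.2]
    · simp [shift, Nat.add_comm]
    · intro q hq hne
      rw [iter_deriv_one hdy (by simp only [Finset.mem_range] at hq; omega), iter_deriv_zero hdx]
      simp
    · intro h; exact absurd (Finset.self_mem_range_succ ij.2) h
  · intro p hp hne
    rw [Finset.sum_eq_zero]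
    intro q hq
    by_cases hq2 : q = ij.2
    · subst hq2
      simp only [Nat.sub_self, Function.iterate_zero, id]
      rw [iter_deriv_one hdx (by simp at hp; omega)]
      simp
    · rw [iter_deriv_one hdy (by simp only [Finset.mem_range] at hq; omega), iter_deriv_zero hdx]
      simp
  · intro h; exact absurd (Finset.self_mem_range_succ ij.1) h

end LPDO
end helpers2

section helpers3
variable {K : Type*} [Field K] {dx dy : K → K}
namespace LPDO

lemma comp_DxofK_apply (hdx : IsDeriv dx) (hdy : IsDeriv dy) (n : K) (B : LPDO K)
    (m : ℕ × ℕ) :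
    comp dx dy (Dx + ofK n) B m
      = dx (B m) + Finsupp.mapDomain shift B m + n * B m := by
  rw [comp_add_left, comp_Dx_left hdy, comp_ofK_left hdx hdy, Finsupp.add_apply,
    Finsupp.add_apply, sum_single_apply B dx (IsDeriv_deriv_zero hdx),
    sum_single_apply B (fun b => n * b) (mul_zero n)]

end LPDO
end helpers3

/-- if all nonzero coefficients `a₀ⱼ` of `L` (of order `d`) are
proportional with `∂x`-constant ratios, then there are `n ∈ K` and `L1` with
`Sym L1 = Sym L` and `(Dx + n) ∘ L = L1 ∘ Dx`; in particular `L` admits a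
Darboux transformation generated by `Dx`. -/
theorem statement7 {K : Type*} [Field K] [CharZero K]
    (dx dy : K → K) (hdx : IsDeriv dx) (hdy : IsDeriv dy)
    (hcomm : ∀ a : K, dx (dy a) = dy (dx a))
    (L : LPDO K) (hLne : L ≠ 0) (d : ℕ) (hd : LPDO.ord L = d)
    (hcond : ∀ j k : ℕ, j ≤ d → k ≤ d → L (0, j) ≠ 0 → L (0, k) ≠ 0 →
      dx (L (0, j) * (L (0, k))⁻¹) = 0) :
    (∃ (n : K) (L1 : LPDO K), LPDO.SameSym L1 L ∧
      LPDO.comp dx dy (LPDO.Dx + LPDO.ofK n) L = LPDO.comp dx dy L1 LPDO.Dx) ∧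
    LPDO.AdmitsDarboux dx dy L LPDO.Dx := by
  have hdx0 : dx 0 = 0 := IsDeriv_deriv_zero hdx
  -- coefficients beyond order vanish
  have hbig : ∀ i j : ℕ, d < i + j → L (i, j) = 0 := by
    intro i j hij
    by_contra h
    have hm : (i, j) ∈ L.support := Finsupp.mem_support_iff.mpr h
    have h2 : i + j ≤ LPDO.ord L :=
      Finset.le_sup (f := fun ij : ℕ × ℕ => ij.1 + ij.2) hm
    omega
  -- choice of n
  obtain ⟨n, hn⟩ : ∃ n : K, ∀ j : ℕ, dx (L (0, j)) + n * L (0, j) = 0 := by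
    by_cases hall : ∀ j : ℕ, L (0, j) = 0
    · exact ⟨0, fun j => by rw [hall j, hdx0]; ring⟩
    · push_neg at hall
      obtain ⟨k, hk⟩ := hall
      refine ⟨-(dx (L (0, k)) / L (0, k)), fun j => ?_⟩
      by_cases hj : L (0, j) = 0
      · rw [hj, hdx0]; ring
      · have hjd : j ≤ d := by
          by_contra h; exact hj (hbig 0 j (by omega))
        have hkd : k ≤ d := by
          by_contra h; exact hk (hbig 0 k (by omega))
        have hc := hcond j k hjd hkd hj hk
        have hL := hdx.2 (L (0, j)) (L (0, k))⁻¹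
        rw [hc] at hL
        have hinv := hdx.2 (L (0, k)) (L (0, k))⁻¹
        rw [mul_inv_cancel₀ hk, IsDeriv_deriv_one hdx] at hinv
        set a := L (0, j) with ha
        set b := L (0, k) with hb
        set A := dx a with hA
        set Bd := dx b with hBd
        set e := dx b⁻¹ with he
        field_simp at hL hinv ⊢
        linear_combination (-b) * hL + a * hinv
  set P : LPDO K := LPDO.comp dx dy (LPDO.Dx + LPDO.ofK n) L with hPdef
  have hPapp : ∀ m : ℕ × ℕ,
      P m = dx (L m) + Finsupp.mapDomain LPDO.shift L m + n * L m :=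
    fun m => LPDO.comp_DxofK_apply hdx hdy n L m
  have hP0 : ∀ j : ℕ, P (0, j) = 0 := by
    intro j
    rw [hPapp, LPDO.mapDomain_shift_zero]
    have := hn j
    linear_combination this
  have hPs : ∀ i j : ℕ, P (i + 1, j) = dx (L (i + 1, j)) + L (i, j) + n * L (i + 1, j) := by
    intro i j
    rw [hPapp, LPDO.mapDomain_shift_succ]
  set L1 : LPDO K := Finsupp.comapDomain LPDO.shift P (LPDO.shift_inj.injOn) with hL1def
  have hL1app : ∀ i j : ℕ, L1 (i, j) = P (i + 1, j) := by
    intro i j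
    rw [hL1def, Finsupp.comapDomain_apply]
    congr 1
    simp [LPDO.shift, Nat.add_comm]
  have hL1v : ∀ i j : ℕ,
      L1 (i, j) = dx (L (i + 1, j)) + L (i, j) + n * L (i + 1, j) := by
    intro i j; rw [hL1app, hPs]
  have hL1big : ∀ i j : ℕ, d < i + j → L1 (i, j) = 0 := by
    intro i j hij
    rw [hL1v, hbig i j hij, hbig (i + 1) j (by omega), hdx0]; ring
  have hdiag : ∀ i j : ℕ, i + j = d → L1 (i, j) = L (i, j) := by
    intro i j hij
    rw [hL1v, hbig (i + 1) j (by omega), hdx0]; ring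
  -- the composition identity
  have heq : LPDO.comp dx dy (LPDO.Dx + LPDO.ofK n) L = LPDO.comp dx dy L1 LPDO.Dx := by
    rw [LPDO.comp_Dx_right hdx hdy]
    ext m
    obtain ⟨i, j⟩ := m
    cases i with
    | zero => rw [LPDO.mapDomain_shift_zero]; exact hP0 j
    | succ i => rw [LPDO.mapDomain_shift_succ, hL1app]
  -- order of L1
  have hord : LPDO.ord L1 = d := by
    apply le_antisymm
    · apply Finset.sup_le
      intro ij hij
      by_contra h
      exact Finsupp.mem_support_iff.mp hij (hL1big ij.1 ij.2 (by omega))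
    · have hne : L.support.Nonempty := Finsupp.support_nonempty_iff.mpr hLne
      obtain ⟨ij, hmem, hsup⟩ :=
        Finset.exists_mem_eq_sup L.support hne (fun ij : ℕ × ℕ => ij.1 + ij.2)
      have hijd : ij.1 + ij.2 = d := by rw [← hd]; exact hsup.symm
      have hne1 : L1 (ij.1, ij.2) ≠ 0 := by
        rw [hdiag ij.1 ij.2 hijd]
        exact Finsupp.mem_support_iff.mp hmem
      have hmem1 : (ij.1, ij.2) ∈ L1.support := Finsupp.mem_support_iff.mpr hne1
      calc d = ij.1 + ij.2 := hijd.symm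
        _ ≤ LPDO.ord L1 := Finset.le_sup (f := fun ij : ℕ × ℕ => ij.1 + ij.2) hmem1
  have hsym : LPDO.SameSym L1 L := by
    constructor
    · rw [hord, hd]
    · rw [hd]
      unfold LPDO.psym
      apply Finset.sum_congr rfl
      intro i hi
      rw [Finset.mem_range] at hi
      rw [hdiag i (d - i) (by omega)]
  exact ⟨⟨n, L1, hsym, heq⟩, LPDO.Dx + LPDO.ofK n, L1, hsym, heq⟩
end

section
/- Assume K has the property that for every m ≥ 1 and all b_0,…,b_m ∈ K with ∂x(b_j) = 0 for all j and b_m ≠ 0, there exists a nonzero g ∈ K with ∂x(g) = 0 and Σ_{j=0}^{m} b_j·∂y^j(g) = 0 (a differential-closedness assumption). Let L = Σ_{i+j=0}^{d} a_{ij} Dx^i Dy^j be a nonzero operator of order d admitting a Darboux transformation generated by M = Dx. Then { f ∈ K : L(f) = 0 and ∂x(f) = 0 } = {0} if and only if a_{0k} = 0 for all k ∈ {1,…,d} and a_{00} ≠ 0. In other words, the Darboux transformation generated by Dx is invertible precisely under this coefficient condition. -/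
section AuxiliaryLemmas
namespace LPDO
variable {K : Type*} [Field K] {dx dy : K → K}
set_option linter.unusedSectionVars false
variable {dx dy : K → K}

theorem comp_coeff (A B : LPDO K) (r s : ℕ) :
    comp dx dy A B (r, s) =
      A.sum fun ij a => B.sum fun kl b =>
        ∑ p ∈ Finset.range (ij.1 + 1), ∑ q ∈ Finset.range (ij.2 + 1),
          if (p + kl.1, q + kl.2) = (r, s)
          then a * (ij.1.choose p : K) * (ij.2.choose q : K) * dx^[ij.1 - p] (dy^[ij.2 - q] b)
          else 0 := by
  unfold comp
  rw [Finsupp.sum_apply]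
  refine Finsupp.sum_congr fun ij _ => ?_
  rw [Finsupp.sum_apply]
  refine Finsupp.sum_congr fun kl _ => ?_
  rw [Finset.sum_apply']
  refine Finset.sum_congr rfl fun p _ => ?_
  rw [Finset.sum_apply']
  refine Finset.sum_congr rfl fun q _ => ?_
  rw [Finsupp.single_apply]

theorem coeff_ord (A : LPDO K) {i j : ℕ} (h : ord A < i + j) : A (i, j) = 0 := by
  by_contra hne
  have : i + j ≤ ord A := Finset.le_sup (f := fun ij : ℕ × ℕ => ij.1 + ij.2)
    (Finsupp.mem_support_iff.2 hne)
  omega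

theorem exists_coeff_ord (A : LPDO K) (hA : A ≠ 0) :
    ∃ i, i ≤ ord A ∧ A (i, ord A - i) ≠ 0 := by
  obtain ⟨ij, hmem, hsup⟩ := Finset.exists_mem_eq_sup A.support
    (Finsupp.support_nonempty_iff.2 hA) (fun ij : ℕ × ℕ => ij.1 + ij.2)
  have hsum : ij.1 + ij.2 = ord A := hsup.symm
  refine ⟨ij.1, by omega, ?_⟩
  have h2 : ij.2 = ord A - ij.1 := by omega
  rw [← h2, Prod.mk.eta]
  exact Finsupp.mem_support_iff.1 hmem

theorem ord_comp_le (A B : LPDO K) : ord (comp dx dy A B) ≤ ord A + ord B := by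
  apply Finset.sup_le
  intro rs hmem
  rw [Finsupp.mem_support_iff] at hmem
  by_contra hgt
  push_neg at hgt
  apply hmem
  obtain ⟨r, s⟩ := rs
  simp only at hgt
  rw [comp_coeff]
  apply Finset.sum_eq_zero
  intro ij hij
  apply Finset.sum_eq_zero
  intro kl hkl
  have h1 : ij.1 + ij.2 ≤ ord A := Finset.le_sup (f := fun ij : ℕ × ℕ => ij.1 + ij.2) hij
  have h2 : kl.1 + kl.2 ≤ ord B := Finset.le_sup (f := fun ij : ℕ × ℕ => ij.1 + ij.2) hkl
  apply Finset.sum_eq_zero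
  intro p hp
  apply Finset.sum_eq_zero
  intro q hq
  rw [Finset.mem_range] at hp hq
  rw [if_neg]
  intro habs
  rw [Prod.mk.injEq] at habs
  omega

theorem comp_coeff_top (A B : LPDO K) {r s : ℕ} (hrs : r + s = ord A + ord B) :
    comp dx dy A B (r, s) =
      ∑ i ∈ Finset.range (r + 1), A (i, ord A - i) * B (r - i, ord B - (r - i)) := by
  rw [comp_coeff]
  have hstep : (A.sum fun ij a => B.sum fun kl b =>
        ∑ p ∈ Finset.range (ij.1 + 1), ∑ q ∈ Finset.range (ij.2 + 1),
          if (p + kl.1, q + kl.2) = (r, s)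
          then a * (ij.1.choose p : K) * (ij.2.choose q : K) * dx^[ij.1 - p] (dy^[ij.2 - q] b)
          else 0)
      = A.sum fun ij a =>
          if ij.1 + ij.2 = ord A ∧ ij.1 ≤ r ∧ ij.2 ≤ s then a * B (r - ij.1, s - ij.2)
          else 0 := by
    refine Finsupp.sum_congr fun ij hij => ?_
    obtain ⟨i1, i2⟩ := ij
    have hijle : i1 + i2 ≤ ord A := Finset.le_sup (f := fun ij : ℕ × ℕ => ij.1 + ij.2) hij
    simp only
    have inner : ∀ kl ∈ B.support,
        (∑ p ∈ Finset.range (i1 + 1), ∑ q ∈ Finset.range (i2 + 1),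
          if (p + kl.1, q + kl.2) = (r, s)
          then A (i1, i2) * (i1.choose p : K) * (i2.choose q : K) *
            dx^[i1 - p] (dy^[i2 - q] (B kl))
          else 0)
        = if kl = (r - i1, s - i2) then
            (if i1 + i2 = ord A ∧ i1 ≤ r ∧ i2 ≤ s then A (i1, i2) * B kl else 0)
          else 0 := by
      intro kl hkl
      obtain ⟨k, l⟩ := kl
      have hklle : k + l ≤ ord B := Finset.le_sup (f := fun ij : ℕ × ℕ => ij.1 + ij.2) hkl
      by_cases hc : k = r - i1 ∧ l = s - i2 ∧ i1 + i2 = ord A ∧ i1 ≤ r ∧ i2 ≤ s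
      · obtain ⟨hc1, hc2, hc3, hc4, hc5⟩ := hc
        rw [if_pos (by rw [Prod.mk.injEq]; exact ⟨hc1, hc2⟩),
          if_pos ⟨hc3, hc4, hc5⟩]
        rw [Finset.sum_eq_single_of_mem i1 (Finset.self_mem_range_succ _)]
        · rw [Finset.sum_eq_single_of_mem i2 (Finset.self_mem_range_succ _)]
          · rw [if_pos (by rw [Prod.mk.injEq]; omega)]
            simp [Nat.sub_self]
          · intro q hq hqne
            rw [Finset.mem_range] at hq
            rw [if_neg]
            intro habs; rw [Prod.mk.injEq] at habs; omega
        · intro p hp hpne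
          rw [Finset.mem_range] at hp
          apply Finset.sum_eq_zero
          intro q hq
          rw [Finset.mem_range] at hq
          rw [if_neg]
          intro habs; rw [Prod.mk.injEq] at habs; omega
      · have hcond : ¬ ((k, l) = (r - i1, s - i2) ∧ i1 + i2 = ord A ∧ i1 ≤ r ∧ i2 ≤ s) := by
          rw [Prod.mk.injEq]; tauto
        rcases Decidable.em ((k, l) = (r - i1, s - i2)) with hkl2 | hkl2
        · rw [if_pos hkl2, if_neg (by rw [Prod.mk.injEq] at hkl2; tauto)]
          apply Finset.sum_eq_zero
          intro p hp
          apply Finset.sum_eq_zero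
          intro q hq
          rw [Finset.mem_range] at hp hq
          rw [Prod.mk.injEq] at hkl2
          rw [if_neg]
          intro habs; rw [Prod.mk.injEq] at habs
          exact hc ⟨by omega, by omega, by omega, by omega, by omega⟩
        · rw [if_neg hkl2]
          apply Finset.sum_eq_zero
          intro p hp
          apply Finset.sum_eq_zero
          intro q hq
          rw [Finset.mem_range] at hp hq
          rw [if_neg]
          intro habs; rw [Prod.mk.injEq] at habs
          apply hkl2
          rw [Prod.mk.injEq]
          constructor <;> omega
    calc (B.sum fun kl b =>
        ∑ p ∈ Finset.range (i1 + 1), ∑ q ∈ Finset.range (i2 + 1),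
          if (p + kl.1, q + kl.2) = (r, s)
          then A (i1, i2) * (i1.choose p : K) * (i2.choose q : K) *
            dx^[i1 - p] (dy^[i2 - q] b)
          else 0)
        = B.sum fun kl _ =>
            if kl = (r - i1, s - i2) then
              (if i1 + i2 = ord A ∧ i1 ≤ r ∧ i2 ≤ s then A (i1, i2) * B kl else 0)
            else 0 := Finsupp.sum_congr inner
      _ = if i1 + i2 = ord A ∧ i1 ≤ r ∧ i2 ≤ s then A (i1, i2) * B (r - i1, s - i2)
          else 0 := by
          rw [Finsupp.sum_ite_eq']
          by_cases hmem : (r - i1, s - i2) ∈ B.support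
          · rw [if_pos hmem]
          · rw [if_neg hmem]
            rw [Finsupp.notMem_support_iff] at hmem
            rw [hmem, mul_zero]
            simp
  rw [hstep]
  have hsub : A.support ⊆ A.support ∪ (Finset.range (r + 1)).image (fun i => (i, ord A - i)) :=
    Finset.subset_union_left
  rw [Finsupp.sum_of_support_subset A hsub _ (by intro i _; simp)]
  rw [← Finset.sum_subset (Finset.subset_union_right :
      (Finset.range (r + 1)).image (fun i => (i, ord A - i)) ⊆ _) ?van]
  case van =>
    intro x hx hnx
    obtain ⟨x1, x2⟩ := x
    rw [if_neg]
    intro ⟨h1, h2, h3⟩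
    apply hnx
    rw [Finset.mem_image]
    exact ⟨x1, Finset.mem_range.2 (by omega), by rw [Prod.mk.injEq]; omega⟩
  rw [Finset.sum_image (by intro a _ b _ h; rw [Prod.mk.injEq] at h; exact h.1)]
  refine Finset.sum_congr rfl fun i hi => ?_
  rw [Finset.mem_range] at hi
  simp only
  by_cases h1 : i ≤ ord A
  · by_cases h2 : r - i ≤ ord B
    · rw [if_pos ⟨by omega, by omega, by omega⟩]
      have harg : s - (ord A - i) = ord B - (r - i) := by omega
      rw [harg]
    · rw [if_neg (by omega)]
      have : ord B - (r - i) = 0 := by omega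
      rw [this, coeff_ord B (by omega), mul_zero]
  · rw [if_neg (by omega)]
    have : ord A - i = 0 := by omega
    rw [this, coeff_ord A (by omega), zero_mul]

-- derivation lemmas
theorem deriv_zero (h : IsDeriv dx) : dx 0 = 0 := by
  have := h.1 0 0; simp at this; exact this

theorem deriv_one' (h : IsDeriv dx) : dx 1 = 0 := by
  have := h.2 1 1; simp at this; exact this

theorem deriv_iter_zero (h : IsDeriv dx) (n : ℕ) : dx^[n] (0 : K) = 0 := by
  induction n with
  | zero => simp
  | succ n ih => rw [Function.iterate_succ_apply, deriv_zero h, ih]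

theorem deriv_iter_one (h : IsDeriv dx) {n : ℕ} (hn : 1 ≤ n) : dx^[n] (1 : K) = 0 := by
  obtain ⟨m, rfl⟩ := Nat.exists_eq_add_of_le hn
  rw [add_comm, Function.iterate_add_apply, Function.iterate_one, deriv_one' h,
    deriv_iter_zero h]

theorem deriv_comm_iter (hcomm : ∀ a : K, dx (dy a) = dy (dx a)) (j : ℕ) (f : K) :
    dx (dy^[j] f) = dy^[j] (dx f) := by
  induction j generalizing f with
  | zero => simp
  | succ j ih =>
    rw [Function.iterate_succ_apply, Function.iterate_succ_apply, ih, hcomm]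

theorem iter_kill (hdx : IsDeriv dx) (hdy : IsDeriv dy)
    (hcomm : ∀ a : K, dx (dy a) = dy (dx a))
    {f : K} (hf : dx f = 0) (i j : ℕ) (hi : 1 ≤ i) : dx^[i] (dy^[j] f) = 0 := by
  obtain ⟨i, rfl⟩ := Nat.exists_eq_add_of_le hi
  rw [add_comm, Function.iterate_add_apply, Function.iterate_one,
    deriv_comm_iter hcomm, hf, deriv_iter_zero hdy, deriv_iter_zero hdx]

theorem deriv_inv' (h : IsDeriv dx) {v : K} (hv : v ≠ 0) :
    dx v⁻¹ = -(dx v) * v⁻¹ * v⁻¹ := by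
  have h1 : dx (v * v⁻¹) = 0 := by rw [mul_inv_cancel₀ hv, deriv_one' h]
  rw [h.2] at h1
  have h2 : v * dx v⁻¹ = -(dx v * v⁻¹) := by linear_combination h1
  calc dx v⁻¹ = v⁻¹ * (v * dx v⁻¹) := by rw [← mul_assoc, inv_mul_cancel₀ hv, one_mul]
    _ = -(dx v) * v⁻¹ * v⁻¹ := by rw [h2]; ring

theorem iter_one_both (hdx : IsDeriv dx) (hdy : IsDeriv dy) (m n : ℕ) (h : 1 ≤ m + n) :
    dx^[m] (dy^[n] (1 : K)) = 0 := by
  rcases Nat.eq_zero_or_pos n with hn | hn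
  · subst hn
    simpa using deriv_iter_one hdx (by omega : 1 ≤ m)
  · rw [deriv_iter_one hdy hn, deriv_iter_zero hdx]

theorem ord_Dx : ord (Dx : LPDO K) = 1 := by
  unfold ord Dx
  rw [Finsupp.support_single_ne_zero _ one_ne_zero]
  simp

theorem comp_zero_left (B : LPDO K) : comp dx dy (0 : LPDO K) B = 0 := by
  unfold comp
  exact Finsupp.sum_zero_index

theorem comp_Dx_coeff (hdx : IsDeriv dx) (hdy : IsDeriv dy) (A : LPDO K) (r s : ℕ) :
    comp dx dy A Dx (r, s) = if 1 ≤ r then A (r - 1, s) else 0 := by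
  rw [comp_coeff]
  have hstep : (A.sum fun ij a => Dx.sum fun kl b =>
        ∑ p ∈ Finset.range (ij.1 + 1), ∑ q ∈ Finset.range (ij.2 + 1),
          if (p + kl.1, q + kl.2) = (r, s)
          then a * (ij.1.choose p : K) * (ij.2.choose q : K) * dx^[ij.1 - p] (dy^[ij.2 - q] b)
          else 0)
      = A.sum fun ij a => if (ij.1 + 1, ij.2) = (r, s) then a else 0 := by
    refine Finsupp.sum_congr fun ij _ => ?_
    obtain ⟨i1, i2⟩ := ij
    unfold Dx
    rw [Finsupp.sum_single_index (by
      apply Finset.sum_eq_zero; intro p _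
      apply Finset.sum_eq_zero; intro q _
      rw [deriv_iter_zero hdy, deriv_iter_zero hdx, mul_zero]
      simp)]
    simp only
    rw [Finset.sum_eq_single_of_mem i1 (Finset.self_mem_range_succ _)]
    · rw [Finset.sum_eq_single_of_mem i2 (Finset.self_mem_range_succ _)]
      · rw [Nat.sub_self, Nat.sub_self]
        simp [Nat.choose_self]
      · intro q hq hqne
        rw [Finset.mem_range] at hq
        rw [iter_one_both hdx hdy _ _ (by omega), mul_zero]
        simp
    · intro p hp hpne
      rw [Finset.mem_range] at hp
      apply Finset.sum_eq_zero
      intro q hq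
      rw [Finset.mem_range] at hq
      rw [iter_one_both hdx hdy _ _ (by omega), mul_zero]
      simp
  rw [hstep]
  by_cases hr : 1 ≤ r
  · rw [if_pos hr]
    have hcongr : ∀ ij ∈ A.support, ∀ a : K,
        (if ((ij : ℕ × ℕ).1 + 1, ij.2) = (r, s) then a else 0)
          = if ij = (r - 1, s) then a else 0 := by
      intro ij _ a
      obtain ⟨i1, i2⟩ := ij
      simp only [Prod.mk.injEq]
      by_cases h : i1 + 1 = r ∧ i2 = s
      · rw [if_pos h, if_pos ⟨by omega, h.2⟩]
      · rw [if_neg h, if_neg (by intro h2; exact h ⟨by omega, h2.2⟩)]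
    rw [Finsupp.sum_congr (g2 := fun ij a => if ij = ((r - 1 : ℕ), s) then a else 0)
      (fun ij hij => hcongr ij hij (A ij))]
    rw [Finsupp.sum_ite_eq']
    by_cases hmem : ((r - 1, s) : ℕ × ℕ) ∈ A.support
    · rw [if_pos hmem]
    · rw [if_neg hmem, Finsupp.notMem_support_iff.1 hmem]
  · rw [if_neg hr]
    apply Finset.sum_eq_zero
    intro ij _
    show (if (ij.1 + 1, ij.2) = (r, s) then A ij else 0) = 0
    rw [if_neg]
    intro habs
    rw [Prod.mk.injEq] at habs
    omega

theorem exists_top_coeff (A B : LPDO K) (hA : A ≠ 0) (hB : B ≠ 0) :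
    ∃ r s : ℕ, r + s = ord A + ord B ∧ comp dx dy A B (r, s) ≠ 0 := by
  classical
  obtain ⟨iA0, hiA0, hA0⟩ := exists_coeff_ord A hA
  obtain ⟨iB0, hiB0, hB0⟩ := exists_coeff_ord B hB
  set SA := (Finset.range (ord A + 1)).filter (fun i => A (i, ord A - i) ≠ 0) with hSA
  set SB := (Finset.range (ord B + 1)).filter (fun i => B (i, ord B - i) ≠ 0) with hSB
  have hSAne : SA.Nonempty := ⟨iA0, Finset.mem_filter.2 ⟨Finset.mem_range.2 (by omega), hA0⟩⟩
  have hSBne : SB.Nonempty := ⟨iB0, Finset.mem_filter.2 ⟨Finset.mem_range.2 (by omega), hB0⟩⟩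
  set iA := SA.max' hSAne with hiA'
  set iB := SB.max' hSBne with hiB'
  have hiA : A (iA, ord A - iA) ≠ 0 := (Finset.mem_filter.1 (SA.max'_mem hSAne)).2
  have hiB : B (iB, ord B - iB) ≠ 0 := (Finset.mem_filter.1 (SB.max'_mem hSBne)).2
  have hiAle : iA ≤ ord A := by
    have := (Finset.mem_filter.1 (SA.max'_mem hSAne)).1
    rw [Finset.mem_range] at this; omega
  have hiBle : iB ≤ ord B := by
    have := (Finset.mem_filter.1 (SB.max'_mem hSBne)).1
    rw [Finset.mem_range] at this; omega
  have hmaxA : ∀ i, iA < i → A (i, ord A - i) = 0 := by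
    intro i hi
    by_cases hle : i ≤ ord A
    · by_contra h
      have : i ∈ SA := Finset.mem_filter.2 ⟨Finset.mem_range.2 (by omega), h⟩
      have := Finset.le_max' SA i this
      omega
    · exact coeff_ord A (by omega)
  have hmaxB : ∀ i, iB < i → B (i, ord B - i) = 0 := by
    intro i hi
    by_cases hle : i ≤ ord B
    · by_contra h
      have : i ∈ SB := Finset.mem_filter.2 ⟨Finset.mem_range.2 (by omega), h⟩
      have := Finset.le_max' SB i this
      omega
    · exact coeff_ord B (by omega)
  refine ⟨iA + iB, (ord A - iA) + (ord B - iB), by omega, ?_⟩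
  rw [comp_coeff_top A B (by omega)]
  rw [Finset.sum_eq_single_of_mem iA (Finset.mem_range.2 (by omega))]
  · have h1 : iA + iB - iA = iB := by omega
    rw [h1]
    exact mul_ne_zero hiA hiB
  · intro i hi hne
    rw [Finset.mem_range] at hi
    rcases Nat.lt_or_ge iA i with h | h
    · rw [hmaxA i h, zero_mul]
    · have h2 : iB < iA + iB - i := by omega
      rw [hmaxB _ h2, mul_zero]

theorem ord_comp_eq {A B : LPDO K} (hA : A ≠ 0) (hB : B ≠ 0) :
    ord (comp dx dy A B) = ord A + ord B := by
  refine le_antisymm (ord_comp_le A B) ?_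
  obtain ⟨r, s, hrs, hne⟩ := exists_top_coeff (dx := dx) (dy := dy) A B hA hB
  have : r + s ≤ ord (comp dx dy A B) :=
    Finset.le_sup (f := fun ij : ℕ × ℕ => ij.1 + ij.2) (Finsupp.mem_support_iff.2 hne)
  omega

theorem apply_zero_right (hdx : IsDeriv dx) (hdy : IsDeriv dy) (A : LPDO K) :
    apply dx dy A 0 = 0 := by
  unfold apply
  apply Finset.sum_eq_zero
  intro ij _
  show A ij * dx^[ij.1] (dy^[ij.2] (0 : K)) = 0
  rw [deriv_iter_zero hdy, deriv_iter_zero hdx, mul_zero]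

theorem apply_of_dx_zero (hdx : IsDeriv dx) (hdy : IsDeriv dy)
    (hcomm : ∀ a : K, dx (dy a) = dy (dx a)) (A : LPDO K) {f : K} (hf : dx f = 0) :
    apply dx dy A f = ∑ j ∈ Finset.range (ord A + 1), A (0, j) * dy^[j] f := by
  unfold apply
  have hsub : A.support ⊆ Finset.range (ord A + 1) ×ˢ Finset.range (ord A + 1) := by
    intro ij hij
    have h := Finset.le_sup (f := fun ij : ℕ × ℕ => ij.1 + ij.2) hij
    have h2 : ij.1 + ij.2 ≤ ord A := h
    rw [Finset.mem_product, Finset.mem_range, Finset.mem_range]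
    omega
  rw [Finsupp.sum_of_support_subset A hsub _ (fun i _ => by simp)]
  rw [Finset.sum_product]
  rw [Finset.sum_eq_single_of_mem 0 (Finset.mem_range.2 (by omega))]
  · simp
  · intro i hi hne
    apply Finset.sum_eq_zero
    intro j hj
    rw [iter_kill hdx hdy hcomm hf i j (by omega), mul_zero]

theorem psym_coeff (A : LPDO K) (dd i : ℕ) (hi : i ≤ dd) :
    MvPolynomial.coeff
      (Finsupp.single (0 : Fin 2) i + Finsupp.single (1 : Fin 2) (dd - i)) (psym A dd)
      = A (i, dd - i) := by
  unfold psym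
  rw [MvPolynomial.coeff_sum]
  rw [Finset.sum_eq_single_of_mem i (Finset.mem_range.2 (by omega))]
  · rw [MvPolynomial.coeff_monomial, if_pos rfl]
  · intro i' _ hne
    rw [MvPolynomial.coeff_monomial, if_neg]
    intro h
    apply hne
    have := DFunLike.congr_fun h (0 : Fin 2)
    simpa using this

theorem comp_N_coeff (hdx : IsDeriv dx) (hdy : IsDeriv dy) {N : LPDO K}
    (hord : ord N ≤ 1) (hbeta : N (0, 1) = 0) (halpha : N (1, 0) = 1) (L : LPDO K) (j : ℕ) :
    comp dx dy N L (0, j) = dx (L (0, j)) + N (0, 0) * L (0, j) := by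
  classical
  rw [comp_coeff]
  have hzero : ∀ ij : ℕ × ℕ,
      (L.sum fun kl b =>
        ∑ p ∈ Finset.range (ij.1 + 1), ∑ q ∈ Finset.range (ij.2 + 1),
          if (p + kl.1, q + kl.2) = (0, j)
          then (0 : K) * (ij.1.choose p : K) * (ij.2.choose q : K) *
            dx^[ij.1 - p] (dy^[ij.2 - q] b)
          else 0) = 0 := by
    intro ij
    apply Finset.sum_eq_zero; intro kl _
    apply Finset.sum_eq_zero; intro p _
    apply Finset.sum_eq_zero; intro q _
    split <;> simp
  have hsub : N.support ⊆ ({((0 : ℕ), (0 : ℕ)), (1, 0), (0, 1)} : Finset (ℕ × ℕ)) := by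
    intro ij hij
    have h : ij.1 + ij.2 ≤ 1 :=
      le_trans (Finset.le_sup (f := fun ij : ℕ × ℕ => ij.1 + ij.2) hij) hord
    obtain ⟨i1, i2⟩ := ij
    simp only [Finset.mem_insert, Finset.mem_singleton, Prod.mk.injEq]
    simp only at h
    omega
  rw [Finsupp.sum_of_support_subset N hsub _ (fun i _ => hzero i)]
  rw [show ({((0 : ℕ), (0 : ℕ)), (1, 0), (0, 1)} : Finset (ℕ × ℕ))
      = insert ((0 : ℕ), (0 : ℕ)) (insert (1, 0) {(0, 1)}) from rfl]
  rw [Finset.sum_insert (by decide), Finset.sum_insert (by decide), Finset.sum_singleton]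
  have term3 : (L.sum fun kl b =>
      ∑ p ∈ Finset.range (0 + 1), ∑ q ∈ Finset.range (1 + 1),
        if (p + kl.1, q + kl.2) = (0, j)
        then N (0, 1) * ((0 : ℕ).choose p : K) * ((1 : ℕ).choose q : K) *
          dx^[0 - p] (dy^[1 - q] b)
        else 0) = 0 := by
    rw [hbeta]
    exact hzero (0, 1)
  have term1 : (L.sum fun kl b =>
      ∑ p ∈ Finset.range (0 + 1), ∑ q ∈ Finset.range (0 + 1),
        if (p + kl.1, q + kl.2) = (0, j)
        then N (0, 0) * ((0 : ℕ).choose p : K) * ((0 : ℕ).choose q : K) *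
          dx^[0 - p] (dy^[0 - q] b)
        else 0) = N (0, 0) * L (0, j) := by
    have h1 : ∀ kl ∈ L.support,
        (∑ p ∈ Finset.range (0 + 1), ∑ q ∈ Finset.range (0 + 1),
          if (p + (kl : ℕ × ℕ).1, q + kl.2) = (0, j)
          then N (0, 0) * ((0 : ℕ).choose p : K) * ((0 : ℕ).choose q : K) *
            dx^[0 - p] (dy^[0 - q] (L kl))
          else 0) = if kl = ((0 : ℕ), j) then N (0, 0) * L kl else 0 := by
      intro kl _
      obtain ⟨k, l⟩ := kl
      simp [Prod.mk.injEq]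
    rw [Finsupp.sum_congr (g2 := fun kl b => if kl = ((0 : ℕ), j) then N (0, 0) * L kl else 0)
      (fun kl hkl => h1 kl hkl)]
    rw [Finsupp.sum_ite_eq']
    by_cases hmem : ((0 : ℕ), j) ∈ L.support
    · rw [if_pos hmem]
    · rw [if_neg hmem, Finsupp.notMem_support_iff.1 hmem, mul_zero]
  have term2 : (L.sum fun kl b =>
      ∑ p ∈ Finset.range (1 + 1), ∑ q ∈ Finset.range (0 + 1),
        if (p + kl.1, q + kl.2) = (0, j)
        then N (1, 0) * ((1 : ℕ).choose p : K) * ((0 : ℕ).choose q : K) *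
          dx^[1 - p] (dy^[0 - q] b)
        else 0) = dx (L (0, j)) := by
    have h1 : ∀ kl ∈ L.support,
        (∑ p ∈ Finset.range (1 + 1), ∑ q ∈ Finset.range (0 + 1),
          if (p + (kl : ℕ × ℕ).1, q + kl.2) = (0, j)
          then N (1, 0) * ((1 : ℕ).choose p : K) * ((0 : ℕ).choose q : K) *
            dx^[1 - p] (dy^[0 - q] (L kl))
          else 0) = if kl = ((0 : ℕ), j) then dx (L kl) else 0 := by
      intro kl _
      obtain ⟨k, l⟩ := kl
      rw [halpha]
      simp [Prod.mk.injEq, Finset.sum_range_succ]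
    rw [Finsupp.sum_congr (g2 := fun kl b => if kl = ((0 : ℕ), j) then dx (L kl) else 0)
      (fun kl hkl => h1 kl hkl)]
    rw [Finsupp.sum_ite_eq']
    by_cases hmem : ((0 : ℕ), j) ∈ L.support
    · rw [if_pos hmem]
    · rw [if_neg hmem, Finsupp.notMem_support_iff.1 hmem, deriv_zero hdx]
  rw [term1, term2, term3]
  ring

end LPDO
end AuxiliaryLemmas

/-- assuming differential closedness (every nontrivial linear ODE
in `∂y` with `∂x`-constant coefficients has a nonzero `∂x`-constant solution),
a Darboux transformation of `L` (nonzero, of order `d`) generated by `Dx` is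
invertible iff `a₀ₖ = 0` for all `k ∈ {1,…,d}` and `a₀₀ ≠ 0`. -/
theorem statement12 {K : Type*} [Field K] [CharZero K]
    (dx dy : K → K) (hdx : IsDeriv dx) (hdy : IsDeriv dy)
    (hcomm : ∀ a : K, dx (dy a) = dy (dx a))
    (hclosed : ∀ m : ℕ, 1 ≤ m → ∀ b : ℕ → K, (∀ j ≤ m, dx (b j) = 0) → b m ≠ 0 →
      ∃ g : K, g ≠ 0 ∧ dx g = 0 ∧ ∑ j ∈ Finset.range (m + 1), b j * dy^[j] g = 0)
    (L : LPDO K) (hLne : L ≠ 0) (d : ℕ) (hd : LPDO.ord L = d)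
    (hD : LPDO.AdmitsDarboux dx dy L LPDO.Dx) :
    {f : K | LPDO.apply dx dy L f = 0 ∧ dx f = 0} = {0} ↔
      (∀ k : ℕ, 1 ≤ k → k ≤ d → L (0, k) = 0) ∧ L (0, 0) ≠ 0 := by
  classical
  constructor
  · -- forward direction
    intro hset
    by_contra hrhs
    have hmain : ∃ g : K, g ≠ 0 ∧ LPDO.apply dx dy L g = 0 ∧ dx g = 0 := by
      by_cases hall : ∀ k : ℕ, 1 ≤ k → k ≤ d → L (0, k) = 0
      · -- case A : also L (0,0) = 0
        have h00 : L (0, 0) = 0 := by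
          by_contra h00
          exact hrhs ⟨hall, h00⟩
        obtain ⟨g, hg0, hgdx, -⟩ := hclosed 1 le_rfl (fun j => if j = 1 then 1 else 0)
          (by intro j _; by_cases h : j = 1 <;>
            simp [h, LPDO.deriv_one' hdx, LPDO.deriv_zero hdx])
          (by simp)
        refine ⟨g, hg0, ?_, hgdx⟩
        rw [LPDO.apply_of_dx_zero hdx hdy hcomm L hgdx, hd]
        apply Finset.sum_eq_zero
        intro j hj
        rw [Finset.mem_range] at hj
        rcases Nat.eq_zero_or_pos j with h | h
        · rw [h, h00, zero_mul]
        · rw [hall j h (by omega), zero_mul]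
      · -- case B : some coefficient L (0,k) ≠ 0 with 1 ≤ k ≤ d
        push_neg at hall
        obtain ⟨k, hk1, hkd, hk0⟩ := hall
        obtain ⟨N, L1, ⟨hordeq, hpsym⟩, hcomp⟩ := hD
        rw [hd] at hordeq hpsym
        have hL1coeff : ∀ i ≤ d, L1 (i, d - i) = L (i, d - i) := by
          intro i hi
          rw [← LPDO.psym_coeff L1 d i hi, ← LPDO.psym_coeff L d i hi, hpsym]
        obtain ⟨i0, hi0le, hi0⟩ := LPDO.exists_coeff_ord L hLne
        rw [hd] at hi0le hi0
        have hL1ne : L1 ≠ 0 := by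
          intro h
          apply hi0
          rw [← hL1coeff i0 hi0le, h]
          rfl
        have hDxne : (LPDO.Dx : LPDO K) ≠ 0 := by
          intro h
          have h2 := DFunLike.congr_fun h ((1 : ℕ), (0 : ℕ))
          simp only [LPDO.Dx, Finsupp.single_eq_same, Finsupp.coe_zero, Pi.zero_apply] at h2
          exact one_ne_zero h2
        have hcompDx_ne : LPDO.comp dx dy L1 LPDO.Dx ≠ 0 := by
          intro h
          have h2 := LPDO.comp_Dx_coeff hdx hdy L1 (i0 + 1) (d - i0)
          rw [h, if_pos (by omega)] at h2
          simp only [Nat.add_sub_cancel] at h2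
          apply hi0
          rw [← hL1coeff i0 hi0le, ← h2]
          rfl
        have hNne : N ≠ 0 := by
          intro h
          apply hcompDx_ne
          rw [← hcomp, h, LPDO.comp_zero_left]
        have hordN : LPDO.ord N = 1 := by
          have h1 : LPDO.ord (LPDO.comp dx dy N L) = LPDO.ord N + d := by
            rw [LPDO.ord_comp_eq hNne hLne, hd]
          have h2 : LPDO.ord (LPDO.comp dx dy L1 LPDO.Dx) = d + 1 := by
            rw [LPDO.ord_comp_eq hL1ne hDxne, LPDO.ord_Dx, hordeq]
          rw [hcomp, h2] at h1
          omega
        -- equations from comparing coefficients at total degree d + 1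
        have hE0 : N (0, 1) * L (0, d) = 0 := by
          have h1 : LPDO.comp dx dy N L (0, 1 + d) = N (0, 1) * L (0, d) := by
            rw [LPDO.comp_coeff_top N L (by rw [hordN, hd]; omega)]
            rw [Finset.sum_range_one, hordN, hd]
            norm_num
          have h2 : LPDO.comp dx dy L1 LPDO.Dx (0, 1 + d) = 0 := by
            rw [LPDO.comp_Dx_coeff hdx hdy, if_neg (by omega)]
          rw [← h1, hcomp, h2]
        have hEr : ∀ i ≤ d,
            N (0, 1) * L (i + 1, d - (i + 1)) + N (1, 0) * L (i, d - i) = L (i, d - i) := by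
          intro i hi
          have h1 : LPDO.comp dx dy N L (i + 1, d - i) =
              N (0, 1) * L (i + 1, d - (i + 1)) + N (1, 0) * L (i, d - i) := by
            rw [LPDO.comp_coeff_top N L (by rw [hordN, hd]; omega), hordN, hd]
            rw [Finset.sum_range_succ', Finset.sum_range_succ']
            have hz : (∑ t ∈ Finset.range i,
                N (t + 1 + 1, 1 - (t + 1 + 1)) *
                  L (i + 1 - (t + 1 + 1), d - (i + 1 - (t + 1 + 1)))) = 0 := by
              apply Finset.sum_eq_zero
              intro t _
              rw [LPDO.coeff_ord N (by rw [hordN]; omega), zero_mul]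
            rw [hz]
            simp only [Nat.sub_self, Nat.add_sub_cancel_left, Nat.sub_zero, zero_add]
            simp only [Nat.add_sub_cancel]
            ring
          have h2 : LPDO.comp dx dy L1 LPDO.Dx (i + 1, d - i) = L (i, d - i) := by
            rw [LPDO.comp_Dx_coeff hdx hdy, if_pos (by omega)]
            simp only [Nat.add_sub_cancel]
            exact hL1coeff i hi
          exact h1.symm.trans (by rw [hcomp]; exact h2)
        -- N (0,1) = 0
        set S := (Finset.range (d + 1)).filter (fun i => L (i, d - i) ≠ 0) with hS
        have hSne : S.Nonempty := ⟨i0, Finset.mem_filter.2 ⟨Finset.mem_range.2 (by omega), hi0⟩⟩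
        have hbeta0 : N (0, 1) = 0 := by
          set im := S.min' hSne with him'
          have him : L (im, d - im) ≠ 0 := (Finset.mem_filter.1 (S.min'_mem hSne)).2
          have himle : im ≤ d := by
            have := (Finset.mem_filter.1 (S.min'_mem hSne)).1
            rw [Finset.mem_range] at this; omega
          have hmin : ∀ i < im, L (i, d - i) = 0 := by
            intro i hilt
            by_contra h
            have hiS : i ∈ S := Finset.mem_filter.2 ⟨Finset.mem_range.2 (by omega), h⟩
            have := Finset.min'_le S i hiS
            omega
          rcases Nat.eq_zero_or_pos im with h0 | h0
          · rw [h0] at him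
            simp only [Nat.sub_zero] at him
            exact (mul_eq_zero.1 hE0).resolve_right him
          · have heq := hEr (im - 1) (by omega)
            rw [hmin (im - 1) (by omega), mul_zero, add_zero] at heq
            rw [show im - 1 + 1 = im from by omega] at heq
            exact (mul_eq_zero.1 heq).resolve_right him
        -- N (1,0) = 1
        have halpha1 : N (1, 0) = 1 := by
          have heq := hEr i0 hi0le
          rw [hbeta0, zero_mul, zero_add] at heq
          have h3 : (N (1, 0) - 1) * L (i0, d - i0) = 0 := by linear_combination heq
          rcases mul_eq_zero.1 h3 with h | h
          · linear_combination h
          · exact absurd h hi0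
        -- the coefficient ODE
        have hODE : ∀ j : ℕ, dx (L (0, j)) = -(N (0, 0) * L (0, j)) := by
          intro j
          have h1 := LPDO.comp_N_coeff hdx hdy (le_of_eq hordN) hbeta0 halpha1 L j
          have h2 : LPDO.comp dx dy L1 LPDO.Dx (0, j) = 0 := by
            rw [LPDO.comp_Dx_coeff hdx hdy, if_neg (by omega)]
          rw [hcomp, h2] at h1
          linear_combination -h1
        -- build the solution g
        set T := (Finset.range (d + 1)).filter (fun j => L (0, j) ≠ 0) with hT
        have hTne : T.Nonempty := ⟨k, Finset.mem_filter.2 ⟨Finset.mem_range.2 (by omega), hk0⟩⟩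
        set m := T.max' hTne with hm'
        have hm : L (0, m) ≠ 0 := (Finset.mem_filter.1 (T.max'_mem hTne)).2
        have hmle : m ≤ d := by
          have := (Finset.mem_filter.1 (T.max'_mem hTne)).1
          rw [Finset.mem_range] at this; omega
        have hm1 : 1 ≤ m := by
          have hkT : k ∈ T := Finset.mem_filter.2 ⟨Finset.mem_range.2 (by omega), hk0⟩
          have := Finset.le_max' T k hkT
          omega
        have hmax : ∀ j, m < j → L (0, j) = 0 := by
          intro j hj
          by_cases hjd : j ≤ d
          · by_contra h
            have hjT : j ∈ T := Finset.mem_filter.2 ⟨Finset.mem_range.2 (by omega), h⟩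
            have := Finset.le_max' T j hjT
            omega
          · exact LPDO.coeff_ord L (by omega)
        obtain ⟨g, hg0, hgdx, hsum⟩ := hclosed m hm1 (fun j => L (0, j) * (L (0, m))⁻¹)
          (by
            intro j _
            show dx (L (0, j) * (L (0, m))⁻¹) = 0
            rw [hdx.2, LPDO.deriv_inv' hdx hm, hODE j, hODE m]
            field_simp
            ring)
          (by
            show L (0, m) * (L (0, m))⁻¹ ≠ 0
            rw [mul_inv_cancel₀ hm]
            exact one_ne_zero)
        refine ⟨g, hg0, ?_, hgdx⟩
        rw [LPDO.apply_of_dx_zero hdx hdy hcomm L hgdx, hd]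
        have hsum2 : ∑ j ∈ Finset.range (m + 1), L (0, j) * dy^[j] g = 0 := by
          have h4 : ∑ j ∈ Finset.range (m + 1), L (0, j) * dy^[j] g =
              (∑ j ∈ Finset.range (m + 1), (L (0, j) * (L (0, m))⁻¹) * dy^[j] g) * L (0, m) := by
            rw [Finset.sum_mul]
            refine Finset.sum_congr rfl fun j _ => ?_
            field_simp
          rw [h4, hsum, zero_mul]
        rw [← Finset.sum_subset (Finset.range_subset_range.2 (by omega : m + 1 ≤ d + 1))
          (by
            intro x hx hnx
            rw [Finset.mem_range] at hx
            rw [Finset.mem_range] at hnx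
            rw [hmax x (by omega), zero_mul])]
        exact hsum2
    obtain ⟨g, hg0, happ, hgdx⟩ := hmain
    have hgmem : g ∈ ({f : K | LPDO.apply dx dy L f = 0 ∧ dx f = 0}) := ⟨happ, hgdx⟩
    rw [hset] at hgmem
    exact hg0 hgmem
  · -- backward direction
    rintro ⟨h1, h2⟩
    apply Set.eq_singleton_iff_unique_mem.2
    constructor
    · exact ⟨LPDO.apply_zero_right hdx hdy L, LPDO.deriv_zero hdx⟩
    · rintro f ⟨happ, hfdx⟩
      rw [LPDO.apply_of_dx_zero hdx hdy hcomm L hfdx, hd] at happ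
      rw [Finset.sum_eq_single_of_mem 0 (Finset.mem_range.2 (by omega))] at happ
      · simp only [Function.iterate_zero, id_eq] at happ
        exact (mul_eq_zero.1 happ).resolve_left h2
      · intro j hj hjne
        rw [Finset.mem_range] at hj
        rw [h1 j (by omega) (by omega), zero_mul]
end

section
/- Let L = Dx∘Dy + a·Dx + b·Dy + c ∈ K[Dx,Dy] with a, b, c ∈ K, and let g ∈ K be invertible with ∂x(g) = −b·g. Then the gauge transform equals L^g = Dx∘Dy + (a + ∂y(g)·g^{-1})·Dx + (c − a·b − ∂y(b)); in particular, the zeroth-order coefficient of L^g is −k, where k = ∂y(b) + a·b − c is a Laplace invariant of L, and L^g has no Dy and no Dy² terms. -/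
section helpers
variable {K : Type*} [Field K]

lemma st15_deriv_zero {d : K → K} (hd : IsDeriv d) : d 0 = 0 := by
  have h := hd.1 0 0
  simp only [add_zero] at h
  exact (left_eq_add.mp h)

lemma st15_deriv_neg {d : K → K} (hd : IsDeriv d) (x : K) : d (-x) = -d x := by
  have h := hd.1 x (-x)
  rw [add_neg_cancel, st15_deriv_zero hd] at h
  linear_combination -h

lemma st15_iter_deriv_zero {d : K → K} (hd : IsDeriv d) (n : ℕ) : d^[n] 0 = 0 := by
  induction n with
  | zero => simp
  | succ n ih => rw [Function.iterate_succ_apply, st15_deriv_zero hd, ih]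

lemma st15_comp_add_left (dx dy : K → K) (A1 A2 B : LPDO K) :
    LPDO.comp dx dy (A1 + A2) B = LPDO.comp dx dy A1 B + LPDO.comp dx dy A2 B := by
  unfold LPDO.comp
  rw [Finsupp.sum_add_index']
  · intro ij
    simp
  · intro ij a1 a2
    simp [add_mul, Finsupp.single_add, Finset.sum_add_distrib, Finsupp.sum_add]

lemma st15_comp_single_ofK (dx dy : K → K) (hdx : IsDeriv dx) (hdy : IsDeriv dy)
    (i j : ℕ) (v m : K) :
    LPDO.comp dx dy (Finsupp.single (i, j) v) (LPDO.ofK m) =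
      ∑ p ∈ Finset.range (i + 1), ∑ q ∈ Finset.range (j + 1),
        Finsupp.single (p, q) (v * (i.choose p : K) * (j.choose q : K) * dx^[i - p] (dy^[j - q] m)) := by
  unfold LPDO.comp LPDO.ofK
  rw [Finsupp.sum_single_index, Finsupp.sum_single_index]
  · simp
  · simp [st15_iter_deriv_zero hdy, st15_iter_deriv_zero hdx]
  · simp

lemma st15_comp_ofK_left (dx dy : K → K) (m : K) (B : LPDO K) :
    LPDO.comp dx dy (LPDO.ofK m) B = m • B := by
  unfold LPDO.comp LPDO.ofK
  rw [Finsupp.sum_single_index]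
  · conv_rhs => rw [← Finsupp.sum_single B]
    rw [Finsupp.smul_sum]
    simp only [Finset.sum_range_one, Nat.choose_self, Nat.cast_one, mul_one,
      Nat.sub_self, Function.iterate_zero, id_eq, zero_add, Finsupp.smul_single,
      smul_eq_mul, Prod.mk.eta]
  · simp

end helpers

/-- for `L = DxDy + aDx + bDy + c` and invertible `g` with
`∂x(g) = -b·g`, one has
`L^g = DxDy + (a + ∂y(g)·g⁻¹)·Dx + (c - ab - ∂y(b))`; in particular the
zeroth-order coefficient of `L^g` is `-k` with `k = ∂y(b) + ab - c`, and `L^g`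
has no `Dy` and no `Dy²` terms. -/
theorem statement15 {K : Type*} [Field K] [CharZero K]
    (dx dy : K → K) (hdx : IsDeriv dx) (hdy : IsDeriv dy)
    (hcomm : ∀ a : K, dx (dy a) = dy (dx a))
    (a b c : K) (L : LPDO K)
    (hL : L = Finsupp.single (1, 1) 1 + Finsupp.single (1, 0) a +
      Finsupp.single (0, 1) b + Finsupp.single (0, 0) c)
    (g : K) (hg : g ≠ 0) (hgx : dx g = -b * g) :
    LPDO.gauge dx dy g L =
      Finsupp.single (1, 1) 1 + Finsupp.single (1, 0) (a + dy g * g⁻¹) +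
        Finsupp.single (0, 0) (c - a * b - dy b) ∧
    (LPDO.gauge dx dy g L) (0, 0) = -(dy b + a * b - c) ∧
    (LPDO.gauge dx dy g L) (0, 1) = 0 ∧
    (LPDO.gauge dx dy g L) (0, 2) = 0 := by
  subst hL
  have key : LPDO.gauge dx dy g (Finsupp.single (1, 1) 1 + Finsupp.single (1, 0) a +
      Finsupp.single (0, 1) b + Finsupp.single (0, 0) c) =
      Finsupp.single (1, 1) 1 + Finsupp.single (1, 0) (a + dy g * g⁻¹) +
        Finsupp.single (0, 0) (c - a * b - dy b) := by
    have hB : LPDO.comp dx dy (Finsupp.single (1, 1) 1 + Finsupp.single (1, 0) a +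
        Finsupp.single (0, 1) b + Finsupp.single (0, 0) c) (LPDO.ofK g) =
        Finsupp.single (1, 1) g + Finsupp.single (1, 0) (dy g + a * g) +
          Finsupp.single (0, 0) ((c - a * b - dy b) * g) := by
      rw [st15_comp_add_left, st15_comp_add_left, st15_comp_add_left,
        st15_comp_single_ofK dx dy hdx hdy, st15_comp_single_ofK dx dy hdx hdy,
        st15_comp_single_ofK dx dy hdx hdy, st15_comp_single_ofK dx dy hdx hdy]
      have h1 : dx (dy g) = -(dy b) * g + -b * dy g := by
        rw [hcomm, hgx, hdy.2, st15_deriv_neg hdy]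
      simp only [Finset.sum_range_succ, Finset.sum_range_zero, Nat.choose_self,
        Nat.choose_zero_right, Nat.cast_one, Nat.sub_self, Nat.sub_zero,
        Function.iterate_one, Function.iterate_zero, id_eq, mul_one, one_mul,
        zero_add, add_zero]
      rw [h1, hgx]
      ext ⟨i, j⟩
      simp only [Finsupp.add_apply, Finsupp.single_apply, Prod.mk.injEq]
      split_ifs <;> ring
    unfold LPDO.gauge
    rw [hB, st15_comp_ofK_left, smul_add, smul_add, Finsupp.smul_single,
      Finsupp.smul_single, Finsupp.smul_single, smul_eq_mul, smul_eq_mul, smul_eq_mul]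
    congr 2
    · field_simp
    · field_simp
      ring
    · field_simp
  refine ⟨key, ?_, ?_, ?_⟩ <;>
    rw [key] <;>
    simp only [Finsupp.add_apply, Finsupp.single_apply, Prod.mk.injEq] <;>
    norm_num <;> ring
end

section
/- Assume K has the property that for every p ∈ K there exists a nonzero f ∈ K with ∂x(f) = p·f. Let L = Dx∘Dy + a·Dx + b·Dy + c ∈ K[Dx,Dy] with a, b, c ∈ K. Then { f ∈ K : L(f) = 0 and ∂x(f) + b·f = 0 } = {0} if and only if the Laplace invariant k = ∂y(b) + a·b − c is nonzero; that is, the Laplace transformation of L generated by M = Dx + b is invertible exactly when k ≠ 0. -/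
/-- assume every `p ∈ K` admits a nonzero `f` with
`∂x(f) = p·f`.  For `L = DxDy + aDx + bDy + c`, the Laplace transformation of
`L` generated by `M = Dx + b` is invertible (`ker L ∩ ker M = {0}`) iff the
Laplace invariant `k = ∂y(b) + ab - c` is nonzero. -/
theorem statement16 {K : Type*} [Field K] [CharZero K]
    (dx dy : K → K) (hdx : IsDeriv dx) (hdy : IsDeriv dy)
    (hcomm : ∀ a : K, dx (dy a) = dy (dx a))
    (hclosed : ∀ p : K, ∃ f : K, f ≠ 0 ∧ dx f = p * f)
    (a b c : K) :
    {f : K | dx (dy f) + a * dx f + b * dy f + c * f = 0 ∧ dx f + b * f = 0}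
        = {0} ↔
      dy b + a * b - c ≠ 0 := by
  obtain ⟨hdxadd, hdxmul⟩ := hdx
  obtain ⟨hdyadd, hdymul⟩ := hdy
  have hdy0 : dy 0 = 0 := by
    have h := hdyadd 0 0
    rw [add_zero] at h
    exact (left_eq_add.mp h)
  have hdx0 : dx 0 = 0 := by
    have h := hdxadd 0 0
    rw [add_zero] at h
    exact (left_eq_add.mp h)
  have hdynegb : dy (-b) = -dy b := by
    have h := hdyadd b (-b)
    rw [add_neg_cancel, hdy0] at h
    linear_combination -h
  -- key reduction: on ker (Dx + b), L acts as -k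
  have key : ∀ f : K, dx f + b * f = 0 →
      dx (dy f) + a * dx f + b * dy f + c * f = -(dy b + a * b - c) * f := by
    intro f hf
    have hdxf : dx f = -b * f := by linear_combination hf
    rw [hcomm f, hdxf, hdymul (-b) f, hdynegb]
    ring
  constructor
  · intro hset hk
    obtain ⟨f, hf0, hf⟩ := hclosed (-b)
    have hMf : dx f + b * f = 0 := by linear_combination hf
    have hLf : dx (dy f) + a * dx f + b * dy f + c * f = 0 := by
      rw [key f hMf, hk]; ring
    have : f ∈ ({0} : Set K) := by rw [← hset]; exact ⟨hLf, hMf⟩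
    exact hf0 this
  · intro hk
    ext f
    simp only [Set.mem_setOf_eq, Set.mem_singleton_iff]
    constructor
    · rintro ⟨h1, h2⟩
      have h3 := key f h2
      rw [h1] at h3
      have : -(dy b + a * b - c) ≠ 0 := by
        intro h; apply hk; linear_combination -h
      rcases mul_eq_zero.mp h3.symm with h | h
      · exact absurd h this
      · exact h
    · rintro rfl
      refine ⟨?_, ?_⟩ <;> simp [hdx0, hdy0]
end
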